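/- arXiv:math/0104051 — 2 statements merged into one kernel-verified Lean document; each statement's English description precedes it below -/
import Mathlib

section
/- For every integer m ≥ 1 and any complex number ρ with ρ ≠ 0 and ρ ≠ 1, setting x = ρ(1-ρ), one has x^{-m} = ∑_{n=1}^{m} C(2m-n-1, m-1) · (ρ^{-n} + (1-ρ)^{-n}). -/
/-!
Let `T_m(t) = ∑_{j=0}^{m} C(m+j, m) tʲ` (`negBinomialTrunc`), the truncation of `(1 - t)^{-(m+1)}`
at degree `m`. One has the polynomial identity `(1 - t)^{m+1} T_m(t) + t^{m+1} T_m(1 - t) = 1`: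
by Pascal's rule `(1 - t) T_{m+1}(t) = T_m(t) + C(2m+1, m) t^{m+1} (1 - 2t)`, and the two correction
terms cancel under `t ↦ 1 - t`, so induction on `m` applies. Dividing by `(t(1 - t))^{m+1}` and
expanding `T_m(t) / t^{m+1}` in powers of `t⁻¹` gives the formula.
-/

open Finset

section CommRing

variable {R : Type*} [CommRing R]

def negBinomialTrunc (m : ℕ) (t : R) : R :=
  ∑ j ∈ range (m + 1), ((m + j).choose m : R) * t ^ j

theorem one_sub_mul_negBinomialTrunc_succ (m : ℕ) (t : R) :
    (1 - t) * negBinomialTrunc (m + 1) t =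
      negBinomialTrunc m t + ((2 * m + 1).choose m : R) * t ^ (m + 1) * (1 - 2 * t) := by
  set f : ℕ → R := fun j => ((m + 1 + j).choose (m + 1) : R) * t ^ j
  set g : ℕ → R := fun j => ((m + j).choose m : R) * t ^ j
  have pascal : ∀ j, f (j + 1) = t * f j + g (j + 1) := fun j => by
    simp only [f, g, show m + 1 + (j + 1) = m + 1 + j + 1 by omega, Nat.choose_succ_succ',
      show m + 1 + j = m + (j + 1) by omega]
    push_cast
    ring
  have hshift : negBinomialTrunc (m + 1) t = ∑ j ∈ range (m + 1), f (j + 1) + 1 := by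
    simp [negBinomialTrunc, f, sum_range_succ' _ (m + 1)]
  have hshift_pred : negBinomialTrunc m t + g (m + 1) = ∑ j ∈ range (m + 1), g (j + 1) + 1 := by
    simp [negBinomialTrunc, g, ← sum_range_succ, sum_range_succ' _ (m + 1)]
  have hsplit_top : negBinomialTrunc (m + 1) t = ∑ j ∈ range (m + 1), f j + f (m + 1) := by
    simp [negBinomialTrunc, f, sum_range_succ]
  have hpascal_sum : ∑ j ∈ range (m + 1), f (j + 1) =
      t * ∑ j ∈ range (m + 1), f j + ∑ j ∈ range (m + 1), g (j + 1) := by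
    simp only [pascal, sum_add_distrib, mul_sum]
  have hcentral : ((2 * m + 2).choose (m + 1) : R) = 2 * ((2 * m + 1).choose m : R) := by
    rw [Nat.choose_succ_succ, Nat.choose_symm_half]
    push_cast
    ring
  have hg_top : g (m + 1) = ((2 * m + 1).choose m : R) * t ^ (m + 1) := by
    simp only [g, show m + (m + 1) = 2 * m + 1 by omega]
  have hf_top : f (m + 1) = ((2 * m + 2).choose (m + 1) : R) * t ^ (m + 1) := by
    simp only [f, show m + 1 + (m + 1) = 2 * m + 2 by omega]
  clear_value f g
  linear_combination hshift - t * hsplit_top + hpascal_sum - hshift_pred + hg_top - t * hf_top -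
    t ^ (m + 2) * hcentral

theorem one_sub_pow_mul_negBinomialTrunc_add_pow_mul_negBinomialTrunc_one_sub (m : ℕ) (t : R) :
    (1 - t) ^ (m + 1) * negBinomialTrunc m t + t ^ (m + 1) * negBinomialTrunc m (1 - t) = 1 := by
  induction m with
  | zero => simp [negBinomialTrunc]
  | succ m ih =>
    have ht := one_sub_mul_negBinomialTrunc_succ m t
    have ht' := one_sub_mul_negBinomialTrunc_succ m (1 - t)
    rw [sub_sub_cancel] at ht'
    linear_combination (1 - t) ^ (m + 1) * ht + t ^ (m + 1) * ht' + ih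

end CommRing

section Field

variable {K : Type*} [Field K]

theorem negBinomialTrunc_div_pow_succ (m : ℕ) {t : K} (ht : t ≠ 0) :
    negBinomialTrunc m t / t ^ (m + 1) =
      ∑ n ∈ Icc 1 (m + 1), ((2 * (m + 1) - n - 1).choose m : K) * t ^ (-(n : ℤ)) := by
  rw [negBinomialTrunc, sum_div]
  refine sum_nbij' (fun j => m + 1 - j) (fun n => m + 1 - n) ?_ ?_ ?_ ?_ ?_
  iterate 4 · intro k hk; simp only [mem_range, mem_Icc] at hk ⊢; omega
  · intro j hj
    rw [mem_range] at hj
    rw [show 2 * (m + 1) - (m + 1 - j) - 1 = m + j by omega, zpow_neg, zpow_natCast,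
      show m + 1 = j + (m + 1 - j) by omega, pow_add]
    field_simp
    simp

theorem inv_mul_one_sub_pow_succ (m : ℕ) {t : K} (ht : t ≠ 0) (ht' : 1 - t ≠ 0) :
    ((t * (1 - t)) ^ (m + 1))⁻¹ =
      negBinomialTrunc m t / t ^ (m + 1) + negBinomialTrunc m (1 - t) / (1 - t) ^ (m + 1) := by
  calc ((t * (1 - t)) ^ (m + 1))⁻¹
      = ((1 - t) ^ (m + 1) * negBinomialTrunc m t + t ^ (m + 1) * negBinomialTrunc m (1 - t)) /
          (t ^ (m + 1) * (1 - t) ^ (m + 1)) := by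
        rw [one_sub_pow_mul_negBinomialTrunc_add_pow_mul_negBinomialTrunc_one_sub, mul_pow,
          one_div]
    _ = _ := by
        rw [add_div]
        congr 1 <;> field_simp

end Field

/-- for `m ≥ 1` and `ρ ≠ 0, 1`, with `x = ρ(1-ρ)`,
`x^{-m} = ∑_{n=1}^m C(2m-n-1, m-1) (ρ^{-n} + (1-ρ)^{-n})`. -/
theorem riemann_zeros_inverse_power_sum_expansion (m : ℕ) (hm : 1 ≤ m) (ρ : ℂ)
    (hρ0 : ρ ≠ 0) (hρ1 : ρ ≠ 1) :
    (ρ * (1 - ρ)) ^ (-(m : ℤ)) =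
      ∑ n ∈ Finset.Icc 1 m, ((2 * m - n - 1).choose (m - 1) : ℂ) *
        (ρ ^ (-(n : ℤ)) + (1 - ρ) ^ (-(n : ℤ))) := by
  obtain ⟨m, rfl⟩ : ∃ k, m = k + 1 := ⟨m - 1, by omega⟩
  have hρ1' : 1 - ρ ≠ 0 := sub_ne_zero.mpr hρ1.symm
  rw [zpow_neg, zpow_natCast, inv_mul_one_sub_pow_succ m hρ0 hρ1',
    negBinomialTrunc_div_pow_succ m hρ0, negBinomialTrunc_div_pow_succ m hρ1',
    ← sum_add_distrib, Nat.add_sub_cancel]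
  simp only [mul_add]
end

section
/- Let {x_k} be positive reals with ∑ 1/x_k < ∞, Z(σ) = ∑_k x_k^{−σ} (convergent for Re σ > μ₀ where 0 < μ₀ < 1 is the convergence abscissa), and Δ(z) = ∏_k (1 + z/x_k). Then for μ₀ < Re σ < 1, one has (σ·sin(πσ)/π) · ∫₀^∞ log Δ(z) · z^{−σ−1} dz = Z(σ). -/
/-!
For `z > 0` the factors of `Δ(z)` are `≥ 1` and `∑ z / x_k < ∞`, so
`log Δ(z) = ∑ log (1 + z / x_k)`. By scaling, the Mellin transform of `log (1 + z / x)` at `-s`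
is `x ^ (-s)` times that of `log (1 + z)`, and integration by parts turns the latter into
`s⁻¹ ∫₀^∞ t ^ (-s) / (1 + t) dt = s⁻¹ B(1 - s, s) = π / (s sin πs)`. The same computation at the
real exponent `Re s` gives the `L¹` norms of the summands as `x_k ^ (-Re s)` times a constant;
this is summable since `Re s > μ₀`, which justifies integrating termwise.
-/

open MeasureTheory Set Filter Topology Asymptotics Real

lemma log_tprod_one_add {ι : Type*} {a : ι → ℝ} (ha : ∀ i, 0 < 1 + a i) (hsum : Summable a) :
    log (∏' i, (1 + a i)) = ∑' i, log (1 + a i) := by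
  rw [← rexp_tsum_eq_tprod ha (summable_log_one_add_of_summable hsum), log_exp]

lemma ofReal_integral_norm_cpow_smul_eq_mellin_re {f : ℝ → ℝ} (hf : ∀ t ∈ Ioi (0 : ℝ), 0 ≤ f t)
    (s : ℂ) : ((∫ t in Ioi (0 : ℝ), ‖(t : ℂ) ^ (s - 1) • (f t : ℂ)‖ : ℝ) : ℂ)
      = mellin (fun t => (f t : ℂ)) s.re := by
  rw [mellin, ← integral_complex_ofReal]
  refine setIntegral_congr_fun measurableSet_Ioi fun t (ht : 0 < t) => ?_
  rw [norm_smul, Complex.norm_cpow_eq_rpow_re_of_pos ht, Complex.norm_real,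
    norm_of_nonneg (hf t ht), smul_eq_mul, Complex.ofReal_mul, Complex.ofReal_cpow ht.le]
  simp

lemma isBigO_ofReal_cpow_rpow {l : Filter ℝ} (hl : ∀ᶠ t in l, 0 < t) (s : ℂ) :
    (fun t : ℝ => (t : ℂ) ^ s) =O[l] (· ^ s.re) := by
  refine IsBigO.of_bound 1 ?_
  filter_upwards [hl] with t ht
  rw [Complex.norm_cpow_eq_rpow_re_of_pos ht, one_mul, norm_of_nonneg (by positivity)]

lemma tendsto_ofReal_mul_cpow_of_isBigO {f : ℝ → ℝ} {l : Filter ℝ} {a : ℝ} {s : ℂ}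
    (hl : ∀ᶠ t in l, 0 < t) (hf : f =O[l] (· ^ a)) (hlim : Tendsto (· ^ (a + s.re)) l (𝓝 0)) :
    Tendsto (fun t => (f t : ℂ) * (t : ℂ) ^ s) l (𝓝 0) := by
  refine IsBigO.trans_tendsto ?_ hlim
  refine ((Complex.isBigO_ofReal_left.2 hf).mul (isBigO_ofReal_cpow_rpow hl s)).congr'
    EventuallyEq.rfl ?_
  filter_upwards [hl] with t ht
  rw [rpow_add ht]

lemma mem_integerComplement_of_re_mem_Ioo {s : ℂ} (hs : s.re ∈ Ioo 0 1) :
    s ∈ Complex.integerComplement := by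
  rintro ⟨n, rfl⟩
  have h0 : (0 : ℝ) < n := by simpa using hs.1
  have h1 : (n : ℝ) < 1 := by simpa using hs.2
  norm_cast at h0 h1
  omega

lemma image_div_one_sub_Ioo : (fun u : ℝ => u / (1 - u)) '' Ioo 0 1 = Ioi 0 := by
  ext t
  constructor
  · rintro ⟨u, ⟨hu0, hu1⟩, rfl⟩
    exact div_pos hu0 (sub_pos.2 hu1)
  · intro (ht : 0 < t)
    refine ⟨t / (1 + t), ⟨by positivity, (div_lt_one (by positivity)).2 (by linarith)⟩, ?_⟩
    field_simp
    ring

lemma injOn_div_one_sub : InjOn (fun u : ℝ => u / (1 - u)) (Ioo 0 1) := by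
  intro a ⟨_, ha⟩ b ⟨_, hb⟩ hab
  have : (1 : ℝ) - a ≠ 0 := by linarith
  have : (1 : ℝ) - b ≠ 0 := by linarith
  field_simp at hab
  linarith

lemma hasDerivAt_div_one_sub {u : ℝ} (hu : u ≠ 1) :
    HasDerivAt (fun u : ℝ => u / (1 - u)) ((1 - u) ^ 2)⁻¹ u := by
  have hu' : 1 - u ≠ 0 := sub_ne_zero.2 hu.symm
  refine ((hasDerivAt_id' u).div ((hasDerivAt_id' u).const_sub 1) hu').congr_deriv ?_
  field_simp
  ring

-- The substitution `t = u / (1 - u)` turns this into the beta integral `B(s, 1 - s)`.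
theorem mellin_inv_one_add {s : ℂ} (hs0 : 0 < s.re) (hs1 : s.re < 1) :
    mellin (fun t : ℝ => (1 + (t : ℂ))⁻¹) s = π / Complex.sin (π * s) := by
  have h1s : 0 < (1 - s).re := by simp [hs1]
  rw [← Complex.Gamma_mul_Gamma_one_sub, Complex.Gamma_mul_Gamma_eq_betaIntegral hs0 h1s,
    add_sub_cancel, Complex.Gamma_one, one_mul, Complex.betaIntegral,
    intervalIntegral.integral_of_le zero_le_one, integral_Ioc_eq_integral_Ioo, mellin,
    ← image_div_one_sub_Ioo, integral_image_eq_integral_abs_deriv_smul measurableSet_Ioo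
      (fun u hu => (hasDerivAt_div_one_sub hu.2.ne).hasDerivWithinAt) injOn_div_one_sub]
  refine setIntegral_congr_fun measurableSet_Ioo fun u ⟨hu0, hu1⟩ => ?_
  have h1u : 0 < 1 - u := sub_pos.2 hu1
  have h1u' : ((1 - u : ℝ) : ℂ) ≠ 0 := Complex.ofReal_ne_zero.2 h1u.ne'
  have hdiv : ((u / (1 - u) : ℝ) : ℂ) ^ (s - 1)
      = (u : ℂ) ^ (s - 1) * ((1 - u : ℝ) : ℂ) ^ (1 - s) := by
    rw [div_eq_mul_inv, Complex.ofReal_mul, Complex.mul_cpow_ofReal_nonneg hu0.le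
      (inv_nonneg.2 h1u.le), Complex.ofReal_inv, Complex.inv_cpow _ _
      (by rw [Complex.arg_ofReal_of_nonneg h1u.le]; exact pi_ne_zero.symm), ← Complex.cpow_neg,
      neg_sub]
  have hone : 1 + ((u / (1 - u) : ℝ) : ℂ) = ((1 - u : ℝ) : ℂ)⁻¹ := by
    push_cast at h1u' ⊢
    field_simp
    ring
  have hexp : ((1 - u : ℝ) : ℂ) ^ (1 - s - 1)
      = ((1 - u : ℝ) : ℂ) ^ (1 - s) * ((1 - u : ℝ) : ℂ)⁻¹ := by
    rw [Complex.cpow_sub _ _ h1u', Complex.cpow_one, div_eq_mul_inv]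
  push_cast at hexp h1u'
  rw [abs_of_pos (by positivity), Complex.real_smul, smul_eq_mul, hdiv, hone, inv_inv, hexp]
  push_cast
  field_simp

theorem mellinConvergent_inv_one_add {s : ℂ} (hs0 : 0 < s.re) (hs1 : s.re < 1) :
    MellinConvergent (fun t : ℝ => (1 + (t : ℂ))⁻¹) s := by
  have hcont : ContinuousOn (fun t : ℝ => (1 + (t : ℂ))⁻¹) (Ici 0) :=
    ContinuousOn.inv₀ (by fun_prop) fun t (ht : 0 ≤ t) => by
      exact_mod_cast (show (1 + t : ℝ) ≠ 0 by positivity)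
  refine mellinConvergent_of_isBigO_rpow (a := 1) (b := 0)
    ((hcont.mono Ioi_subset_Ici_self).locallyIntegrableOn measurableSet_Ioi) ?_ hs1 ?_ hs0
  · refine IsBigO.of_bound 1 ?_
    filter_upwards [eventually_gt_atTop 0] with t ht
    rw [norm_inv, ← Complex.ofReal_one, ← Complex.ofReal_add,
      Complex.norm_of_nonneg (by positivity), norm_of_nonneg (by positivity), rpow_neg_one,
      one_mul]
    exact inv_anti₀ ht (by linarith)
  · simp only [neg_zero, rpow_zero]
    exact ((hcont.continuousWithinAt self_mem_Ici).mono
      Ioi_subset_Ici_self).norm.isBoundedUnder_le.isBigO_one ℝ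

lemma isBigO_log_one_add_nhds_zero : (fun t : ℝ => log (1 + t)) =O[𝓝 0] (fun t => t) := by
  simpa using (((hasDerivAt_id' (0 : ℝ)).const_add 1).log (by norm_num)).isBigO_sub

lemma isBigO_log_one_add_rpow_atTop {ε : ℝ} (hε : 0 < ε) :
    (fun t : ℝ => log (1 + t)) =O[atTop] (· ^ ε) := by
  refine IsBigO.of_bound (2 ^ ε / ε) ?_
  filter_upwards [eventually_ge_atTop 1] with t ht
  rw [norm_of_nonneg (log_nonneg (by linarith)), norm_of_nonneg (by positivity)]
  calc log (1 + t) ≤ (1 + t) ^ ε / ε := log_le_rpow_div (by positivity) hε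
    _ ≤ (2 * t) ^ ε / ε := by gcongr; linarith
    _ = 2 ^ ε / ε * t ^ ε := by rw [mul_rpow zero_le_two (by positivity)]; ring

lemma continuousOn_log_one_add : ContinuousOn (fun t : ℝ => (log (1 + t) : ℂ)) (Ioi 0) :=
  Complex.continuous_ofReal.comp_continuousOn <|
    ContinuousOn.log (by fun_prop) fun t (ht : 0 < t) => by positivity

theorem mellinConvergent_log_one_add {s : ℂ} (hs0 : 0 < s.re) (hs1 : s.re < 1) :
    MellinConvergent (fun t : ℝ => (log (1 + t) : ℂ)) (-s) := by
  refine mellinConvergent_of_isBigO_rpow (a := -(s.re / 2)) (b := -1)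
    (continuousOn_log_one_add.locallyIntegrableOn measurableSet_Ioi) ?_ (by simp; linarith) ?_
    (by simp; linarith)
  · rw [neg_neg]
    exact Complex.isBigO_ofReal_left.2 (isBigO_log_one_add_rpow_atTop (by positivity))
  · refine Complex.isBigO_ofReal_left.2
      ((isBigO_log_one_add_nhds_zero.mono nhdsWithin_le_nhds).congr_right ?_)
    simp

lemma tendsto_log_one_add_mul_cpow_neg_nhdsGT_zero {s : ℂ} (hs1 : s.re < 1) :
    Tendsto (fun t : ℝ => (log (1 + t) : ℂ) * (t : ℂ) ^ (-s)) (𝓝[>] 0) (𝓝 0) := by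
  have hpos : 0 < 1 + (-s).re := by simp [hs1]
  have hlim := ((continuous_rpow_const hpos.le).tendsto 0).mono_left
    (nhdsWithin_le_nhds (s := Ioi (0 : ℝ)))
  rw [zero_rpow hpos.ne'] at hlim
  exact tendsto_ofReal_mul_cpow_of_isBigO (l := 𝓝[>] 0) self_mem_nhdsWithin
    ((isBigO_log_one_add_nhds_zero.mono nhdsWithin_le_nhds).congr_right
      fun t => (rpow_one t).symm) hlim

lemma tendsto_log_one_add_mul_cpow_neg_atTop {s : ℂ} (hs0 : 0 < s.re) :
    Tendsto (fun t : ℝ => (log (1 + t) : ℂ) * (t : ℂ) ^ (-s)) atTop (𝓝 0) := by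
  have hlim : Tendsto (fun t : ℝ => t ^ (s.re / 2 + (-s).re)) atTop (𝓝 0) := by
    convert tendsto_rpow_neg_atTop (half_pos hs0) using 3
    simp only [Complex.neg_re]
    ring
  exact tendsto_ofReal_mul_cpow_of_isBigO (eventually_gt_atTop 0)
    (isBigO_log_one_add_rpow_atTop (half_pos hs0)) hlim

theorem mellin_log_one_add {s : ℂ} (hs0 : 0 < s.re) (hs1 : s.re < 1) :
    mellin (fun t : ℝ => (log (1 + t) : ℂ)) (-s) = π / (s * Complex.sin (π * s)) := by
  have hs : s ≠ 0 := fun h => by simp [h] at hs0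
  have hu (t : ℝ) (ht : t ∈ Ioi 0) :
      HasDerivAt (fun t : ℝ => (log (1 + t) : ℂ)) (1 + (t : ℂ))⁻¹ t := by
    have := (((hasDerivAt_id' t).const_add 1).log (by linarith [mem_Ioi.1 ht])).ofReal_comp
    simpa using this
  have hv (t : ℝ) (ht : t ∈ Ioi 0) :
      HasDerivAt (fun t : ℝ => (t : ℂ) ^ (-s) / (-s)) ((t : ℂ) ^ (-s - 1)) t := by
    simpa using hasDerivAt_ofReal_cpow_const' (ne_of_gt ht) (r := -s - 1) (by simpa using hs)
  have h_zero := (tendsto_log_one_add_mul_cpow_neg_nhdsGT_zero hs1).div_const (-s)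
  have h_infty := (tendsto_log_one_add_mul_cpow_neg_atTop hs0).div_const (-s)
  simp only [zero_div, mul_div_assoc] at h_zero h_infty
  have huv' : IntegrableOn (fun t : ℝ => (log (1 + t) : ℂ) * (t : ℂ) ^ (-s - 1)) (Ioi 0) :=
    (mellinConvergent_log_one_add hs0 hs1).congr_fun (fun t _ => mul_comm _ _) measurableSet_Ioi
  have hu'v : IntegrableOn (fun t : ℝ => (1 + (t : ℂ))⁻¹ * ((t : ℂ) ^ (-s) / (-s))) (Ioi 0) :=
    ((mellinConvergent_inv_one_add (s := 1 - s) (by simp [hs1]) (by simp [hs0])).div_const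
      (-s)).congr_fun (fun t _ => by simp only [sub_sub_cancel_left, smul_eq_mul]; ring)
      measurableSet_Ioi
  have hparts := integral_Ioi_mul_deriv_eq_deriv_mul hu hv huv' hu'v h_zero h_infty
  have hsin := sin_pi_mul_ne_zero (mem_integerComplement_of_re_mem_Ioo ⟨hs0, hs1⟩)
  calc mellin (fun t : ℝ => (log (1 + t) : ℂ)) (-s)
      = ∫ t in Ioi 0, (log (1 + t) : ℂ) * (t : ℂ) ^ (-s - 1) :=
        setIntegral_congr_fun measurableSet_Ioi fun t _ => mul_comm _ _
    _ = mellin (fun t : ℝ => (1 + (t : ℂ))⁻¹) (1 - s) / s := by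
        have : ∫ t in Ioi (0 : ℝ), (1 + (t : ℂ))⁻¹ * ((t : ℂ) ^ (-s) / (-s))
            = mellin (fun t : ℝ => (1 + (t : ℂ))⁻¹ / (-s)) (1 - s) :=
          setIntegral_congr_fun measurableSet_Ioi fun t _ => by
            simp only [sub_sub_cancel_left, smul_eq_mul]; ring
        rw [hparts, this, mellin_div_const, div_neg]
        ring
    _ = π / (s * Complex.sin (π * s)) := by
        rw [mellin_inv_one_add (by simp [hs1]) (by simp [hs0]), mul_one_sub, Complex.sin_pi_sub]
        field_simp

theorem mellinConvergent_log_one_add_div {x : ℝ} (hx : 0 < x) {s : ℂ} (hs0 : 0 < s.re)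
    (hs1 : s.re < 1) : MellinConvergent (fun t : ℝ => (log (1 + t / x) : ℂ)) (-s) := by
  simpa only [div_eq_inv_mul] using
    (MellinConvergent.comp_mul_left (inv_pos.2 hx)).2 (mellinConvergent_log_one_add hs0 hs1)

theorem mellin_log_one_add_div {x : ℝ} (hx : 0 < x) {s : ℂ} (hs0 : 0 < s.re) (hs1 : s.re < 1) :
    mellin (fun t : ℝ => (log (1 + t / x) : ℂ)) (-s)
      = (x : ℂ) ^ (-s) * (π / (s * Complex.sin (π * s))) := by
  have hcomp := mellin_comp_mul_left (fun u : ℝ => (log (1 + u) : ℂ)) (-s) (inv_pos.2 hx)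
  simp only [inv_mul_eq_div] at hcomp
  rw [hcomp, mellin_log_one_add hs0 hs1, smul_eq_mul,
    neg_neg, Complex.ofReal_inv, Complex.inv_cpow _ _
      (by rw [Complex.arg_ofReal_of_nonneg hx.le]; exact pi_ne_zero.symm),
    Complex.cpow_neg]

theorem mellin_of_log_delta_eq_zeta_general
    (x : ℕ → ℝ) (hpos : ∀ k, 0 < x k)
    (hsum : Summable fun k => (x k)⁻¹)
    (μ₀ : ℝ) (hμ0 : 0 < μ₀)
    (hconv : ∀ s : ℂ, μ₀ < s.re → Summable fun k => (x k : ℂ) ^ (-s))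
    (s : ℂ) (h1 : μ₀ < s.re) (h2 : s.re < 1) :
    (s * Complex.sin ((Real.pi : ℂ) * s) / (Real.pi : ℂ)) *
        ∫ z in Set.Ioi (0 : ℝ),
          ((Real.log (∏' k : ℕ, (1 + z / x k)) : ℝ) : ℂ) * (z : ℂ) ^ (-s - 1) =
      ∑' k : ℕ, (x k : ℂ) ^ (-s) := by
  have hs0 : 0 < s.re := hμ0.trans h1
  let F : ℕ → ℝ → ℂ := fun k t => (t : ℂ) ^ (-s - 1) • (log (1 + t / x k) : ℂ)
  have hlog (t : ℝ) (ht : 0 < t) :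
      (log (∏' k, (1 + t / x k)) : ℂ) * (t : ℂ) ^ (-s - 1) = ∑' k, F k t := by
    rw [log_tprod_one_add (fun k => by have := hpos k; positivity)
      (by simpa only [div_eq_mul_inv] using hsum.mul_left t), Complex.ofReal_tsum,
      ← tsum_mul_right]
    simp only [F, smul_eq_mul, mul_comm]
  have hnorm : Summable fun k => ∫ t in Ioi 0, ‖F k t‖ := by
    rw [← Complex.summable_ofReal]
    refine ((hconv s.re (by simpa using h1)).mul_right
      (π / (s.re * Complex.sin (π * s.re)))).congr fun k => ?_
    rw [ofReal_integral_norm_cpow_smul_eq_mellin_re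
        (fun t (ht : 0 < t) => log_nonneg (le_add_of_nonneg_right (div_pos ht (hpos k)).le)),
      Complex.neg_re, Complex.ofReal_neg,
      mellin_log_one_add_div (hpos k) (by simpa using hs0) (by simpa using h2)]
  rw [setIntegral_congr_fun measurableSet_Ioi hlog, ← integral_tsum_of_summable_integral_norm
    (fun k => mellinConvergent_log_one_add_div (hpos k) hs0 h2) hnorm]
  change _ * ∑' k, mellin (fun t : ℝ => (log (1 + t / x k) : ℂ)) (-s) = _
  have hs : s ≠ 0 := fun h => by simp [h] at hs0
  have hsin := sin_pi_mul_ne_zero (mem_integerComplement_of_re_mem_Ioo ⟨hs0, h2⟩)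
  have hπ : (π : ℂ) ≠ 0 := Complex.ofReal_ne_zero.2 pi_ne_zero
  rw [tsum_congr fun k => mellin_log_one_add_div (hpos k) hs0 h2, tsum_mul_right, mul_comm,
    mul_assoc, div_mul_div_comm, mul_comm (π : ℂ), div_self (by simp [hs, hsin, hπ]), mul_one]

/-- for positive reals `x_k` with `∑ 1/x_k < ∞`,
`Z(σ) = ∑_k x_k^{-σ}` (convergent for `Re σ > μ₀`, the convergence abscissa,
`0 < μ₀ < 1`) and `Δ(z) = ∏_k (1 + z/x_k)`, one has, for `μ₀ < Re σ < 1`,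
`(σ sin(πσ)/π) ∫₀^∞ log Δ(z) z^{-σ-1} dz = Z(σ)`. -/
theorem mellin_of_log_delta_eq_zeta
    (x : ℕ → ℝ) (hpos : ∀ k, 0 < x k)
    (hsum : Summable fun k => (x k)⁻¹)
    (μ₀ : ℝ) (hμ0 : 0 < μ₀) (hμ1 : μ₀ < 1)
    (hconv : ∀ s : ℂ, μ₀ < s.re → Summable fun k => (x k : ℂ) ^ (-s))
    (hdiv : ∀ σ : ℝ, σ < μ₀ → ¬ Summable fun k => (x k) ^ (-σ))
    (s : ℂ) (h1 : μ₀ < s.re) (h2 : s.re < 1) :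
    (s * Complex.sin ((Real.pi : ℂ) * s) / (Real.pi : ℂ)) *
        ∫ z in Set.Ioi (0 : ℝ),
          ((Real.log (∏' k : ℕ, (1 + z / x k)) : ℝ) : ℂ) * (z : ℂ) ^ (-s - 1) =
      ∑' k : ℕ, (x k : ℂ) ^ (-s) :=
  mellin_of_log_delta_eq_zeta_general x hpos hsum μ₀ hμ0 hconv s h1 h2
end
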